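/- Under the pseudo regression setup, suppose |u(z)| ≤ D and Var[Y^{(1)} | 𝒰^{(1)} = z] ≤ σ² for all z ∈ 𝒟, and let λ_min > 0 and λ_max denote the smallest and largest eigenvalue of the Gram matrix 𝒢. Let u^K be the L²(μ)-orthogonal projection of u onto span{ψ_1,…,ψ_K}. Then E ∫_𝒟 |ū(z) − u^K(z)|² μ(dz) ≤ (σ² + D²)·tr(𝒢)/(M·λ_min) ≤ (σ² + D²)·K·λ_max/(M·λ_min). -/

import Mathlib

/-!
Put `a_l(z, y) = ψ_l(z) y` and `Z_l = ∑_m a_l(𝒰^{(m)}, Y^{(m)})`. Orthogonality of `u - u^K` to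
the `ψ_k` gives `E a_l = (𝒢γ)_l`, so `β̄ - γ = M⁻¹ 𝒢⁻¹ (Z - E Z)` and the inner integral is the
quadratic form `M⁻² (Z - E Z)ᵀ 𝒢⁻¹ (Z - E Z)`. By independence its expectation is
`M⁻¹ ∑ᵢⱼ (𝒢⁻¹)ᵢⱼ Cov(aᵢ, aⱼ)`, and `𝒢⁻¹ ≤ λ_min⁻¹` bounds this by `(M λ_min)⁻¹ ∑_l E a_l²`.
Finally `E[Y² | 𝒰] = v(𝒰) + u(𝒰)² ≤ σ² + D²`, so `E a_l² ≤ (σ² + D²) 𝒢_{ll}`, while the diagonal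
entries of `𝒢` are at most `λ_max`.
-/

open MeasureTheory ProbabilityTheory Matrix
open scoped ENNReal

namespace Matrix

variable {ι : Type*} [Fintype ι]

theorem sum_sum_mul_mul_eq_dotProduct_mulVec (A : Matrix ι ι ℝ) (x y : ι → ℝ) :
    ∑ i, ∑ j, x i * A i j * y j = x ⬝ᵥ A *ᵥ y := by
  simp only [dotProduct, mulVec, Finset.mul_sum, mul_assoc]

theorem sum_sq_eq_dotProduct_self (x : ι → ℝ) : ∑ i, x i ^ 2 = x ⬝ᵥ x := by
  simp only [dotProduct, sq]

variable [DecidableEq ι] {A : Matrix ι ι ℝ} {c : ℝ}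

theorem isUnit_det_of_coercive (hc : 0 < c) (hA : ∀ x, c * (x ⬝ᵥ x) ≤ x ⬝ᵥ A *ᵥ x) :
    IsUnit A.det := by
  rw [isUnit_iff_ne_zero, Ne, ← exists_mulVec_eq_zero_iff]
  rintro ⟨x, hx0, hAx⟩
  have hxx : x ⬝ᵥ x ≤ 0 := by
    have := hA x
    rw [hAx, dotProduct_zero] at this
    exact nonpos_of_mul_nonpos_right this hc
  exact hx0 (dotProduct_self_eq_zero.1 (le_antisymm hxx (dotProduct_self_star_nonneg x)))

theorem dotProduct_inv_mulVec_le (hc : 0 < c) (hA : ∀ x, c * (x ⬝ᵥ x) ≤ x ⬝ᵥ A *ᵥ x)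
    (x : ι → ℝ) : x ⬝ᵥ A⁻¹ *ᵥ x ≤ c⁻¹ * (x ⬝ᵥ x) := by
  set y := A⁻¹ *ᵥ x
  have hAy : A *ᵥ y = x := by
    rw [mulVec_mulVec, mul_nonsing_inv _ (isUnit_det_of_coercive hc hA), one_mulVec]
  have hcy : c * (y ⬝ᵥ y) ≤ x ⬝ᵥ y := by simpa [hAy, dotProduct_comm] using hA y
  have hsq : 0 ≤ (c • y - x) ⬝ᵥ (c • y - x) := by
    simpa using dotProduct_self_star_nonneg (c • y - x)
  simp only [sub_dotProduct, dotProduct_sub, smul_dotProduct, dotProduct_smul, smul_eq_mul,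
    dotProduct_comm y x] at hsq
  rw [le_inv_mul_iff₀ hc]
  -- expanding `0 ≤ ‖c • y - x‖²` and inserting `hcy` leaves `c ⟪x, y⟫ ≤ ‖x‖²`
  nlinarith

theorem dotProduct_mulVec_inv_mulVec (hA : IsUnit A.det) (x : ι → ℝ) :
    (A⁻¹ *ᵥ x) ⬝ᵥ A *ᵥ (A⁻¹ *ᵥ x) = x ⬝ᵥ A⁻¹ *ᵥ x := by
  rw [mulVec_mulVec, mul_nonsing_inv _ hA, one_mulVec, dotProduct_comm]

theorem trace_le_card_mul (hA : ∀ x, x ⬝ᵥ A *ᵥ x ≤ c * (x ⬝ᵥ x)) :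
    A.trace ≤ Fintype.card ι * c := by
  have hdiag : ∀ i, A i i ≤ c := fun i => by
    simpa [dotProduct_single, mulVec_single] using hA (Pi.single i 1)
  calc A.trace = ∑ i, A i i := rfl
    _ ≤ ∑ _i : ι, c := Finset.sum_le_sum fun i _ => hdiag i
    _ = Fintype.card ι * c := by simp

end Matrix

section Gram

variable {α ι : Type*} [MeasurableSpace α] [Fintype ι] {μ : Measure α} {ψ : ι → α → ℝ}
  {G : Matrix ι ι ℝ}

theorem integral_sq_sum_mul_eq_dotProduct_mulVec (hψ : ∀ k, MemLp (ψ k) 2 μ)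
    (hG : ∀ k l, G k l = ∫ z, ψ k z * ψ l z ∂μ) (x : ι → ℝ) :
    ∫ z, (∑ k, x k * ψ k z) ^ 2 ∂μ = x ⬝ᵥ G *ᵥ x := by
  have hint : ∀ k l, Integrable (fun z => x k * x l * (ψ k z * ψ l z)) μ :=
    fun k l => ((hψ k).integrable_mul (hψ l)).const_mul _
  calc ∫ z, (∑ k, x k * ψ k z) ^ 2 ∂μ
      = ∫ z, ∑ k, ∑ l, x k * x l * (ψ k z * ψ l z) ∂μ := by
        congr 1 with z
        rw [sq, Finset.sum_mul_sum]
        exact Finset.sum_congr rfl fun k _ => Finset.sum_congr rfl fun l _ => by ring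
    _ = ∑ k, ∑ l, x k * G k l * x l := by
        rw [integral_finsetSum _ fun k _ => integrable_finsetSum _ fun l _ => hint k l]
        refine Finset.sum_congr rfl fun k _ => ?_
        rw [integral_finsetSum _ fun l _ => hint k l]
        refine Finset.sum_congr rfl fun l _ => ?_
        rw [integral_const_mul, hG]
        ring
    _ = x ⬝ᵥ G *ᵥ x := sum_sum_mul_mul_eq_dotProduct_mulVec G x x

theorem mulVec_apply_eq_integral_of_orthogonal (hψ : ∀ k, MemLp (ψ k) 2 μ)
    (hG : ∀ k l, G k l = ∫ z, ψ k z * ψ l z ∂μ) {u : α → ℝ} {γ : ι → ℝ}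
    (hu : ∀ k, Integrable (fun z => u z * ψ k z) μ)
    (hproj : ∀ k, ∫ z, ((∑ l, γ l * ψ l z) - u z) * ψ k z ∂μ = 0) (k : ι) :
    (G *ᵥ γ) k = ∫ z, ψ k z * u z ∂μ := by
  have hint : ∀ l, Integrable (fun z => γ l * (ψ l z * ψ k z)) μ :=
    fun l => ((hψ l).integrable_mul (hψ k)).const_mul _
  have h := hproj k
  simp_rw [sub_mul, Finset.sum_mul, mul_assoc] at h
  rw [integral_sub (integrable_finsetSum _ fun l _ => hint l) (hu k),
    integral_finsetSum _ fun l _ => hint l, sub_eq_zero] at h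
  simp_rw [mul_comm (ψ k _), ← h, integral_const_mul, mulVec, dotProduct, hG, mul_comm (ψ k _)]
  exact Finset.sum_congr rfl fun l _ => mul_comm _ _

theorem integral_sq_sum_sub_eq [DecidableEq ι] (hψ : ∀ k, MemLp (ψ k) 2 μ)
    (hG : ∀ k l, G k l = ∫ z, ψ k z * ψ l z ∂μ) (hdet : IsUnit G.det) {M : ℝ} (hM : M ≠ 0)
    (Z γ : ι → ℝ) :
    ∫ z, ((∑ k, (M⁻¹ * ∑ l, G⁻¹ k l * Z l) * ψ k z) - ∑ k, γ k * ψ k z) ^ 2 ∂μ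
      = M⁻¹ ^ 2 * ((Z - M • G *ᵥ γ) ⬝ᵥ G⁻¹ *ᵥ (Z - M • G *ᵥ γ)) := by
  set w := Z - M • G *ᵥ γ
  have hcoef : ∀ k, M⁻¹ * ∑ l, G⁻¹ k l * Z l - γ k = (M⁻¹ • G⁻¹ *ᵥ w) k := by
    intro k
    simp only [w, mulVec_sub, mulVec_smul, mulVec_mulVec, nonsing_inv_mul _ hdet, one_mulVec,
      Pi.sub_apply, Pi.smul_apply, smul_eq_mul, mulVec, dotProduct]
    field_simp
  calc _ = ∫ z, (∑ k, (M⁻¹ • G⁻¹ *ᵥ w) k * ψ k z) ^ 2 ∂μ := by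
        congr 1 with z
        simp_rw [← hcoef, sub_mul, Finset.sum_sub_distrib]
    _ = M⁻¹ ^ 2 * (w ⬝ᵥ G⁻¹ *ᵥ w) := by
        rw [integral_sq_sum_mul_eq_dotProduct_mulVec hψ hG, mulVec_smul, smul_dotProduct,
          dotProduct_smul, dotProduct_mulVec_inv_mulVec hdet]
        simp only [smul_eq_mul]
        ring

end Gram

section Covariance

variable {Ω : Type*} [MeasurableSpace Ω] {P : Measure Ω} {ι : Type*} [Fintype ι]

theorem integrable_sub_integral_mul_sub_integral [IsFiniteMeasure P] {X Y : Ω → ℝ}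
    (hX : MemLp X 2 P) (hY : MemLp Y 2 P) :
    Integrable (fun ω => (X ω - P[X]) * (Y ω - P[Y])) P :=
  (hX.sub (memLp_const _)).integrable_mul (hY.sub (memLp_const _))

theorem integrable_dotProduct_mulVec_sub_integral [IsFiniteMeasure P] {X : ι → Ω → ℝ}
    (hX : ∀ i, MemLp (X i) 2 P) (B : Matrix ι ι ℝ) :
    Integrable (fun ω => (fun i => X i ω - P[X i]) ⬝ᵥ B *ᵥ (fun i => X i ω - P[X i])) P := by
  simp_rw [← sum_sum_mul_mul_eq_dotProduct_mulVec, mul_right_comm _ (B _ _)]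
  exact integrable_finsetSum _ fun i _ => integrable_finsetSum _ fun j _ =>
    (integrable_sub_integral_mul_sub_integral (hX i) (hX j)).mul_const _

theorem integral_dotProduct_mulVec_sub_integral [IsFiniteMeasure P] {X : ι → Ω → ℝ}
    (hX : ∀ i, MemLp (X i) 2 P) (B : Matrix ι ι ℝ) :
    ∫ ω, (fun i => X i ω - P[X i]) ⬝ᵥ B *ᵥ (fun i => X i ω - P[X i]) ∂P
      = ∑ i, ∑ j, B i j * cov[X i, X j; P] := by
  have hint : ∀ i j, Integrable (fun ω => (X i ω - P[X i]) * (X j ω - P[X j]) * B i j) P :=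
    fun i j => (integrable_sub_integral_mul_sub_integral (hX i) (hX j)).mul_const _
  simp_rw [← sum_sum_mul_mul_eq_dotProduct_mulVec, mul_right_comm _ (B _ _)]
  rw [integral_finsetSum _ fun i _ => integrable_finsetSum _ fun j _ => hint i j]
  refine Finset.sum_congr rfl fun i _ => ?_
  rw [integral_finsetSum _ fun j _ => hint i j]
  refine Finset.sum_congr rfl fun j _ => ?_
  rw [integral_mul_const, covariance, mul_comm]

theorem covariance_sum_sum_of_indepFun [IsFiniteMeasure P] {κ : Type*} [Fintype κ]
    {X Y : κ → Ω → ℝ} (hX : ∀ m, MemLp (X m) 2 P) (hY : ∀ m, MemLp (Y m) 2 P)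
    (hXY : ∀ m n, m ≠ n → IndepFun (X m) (Y n) P) :
    cov[fun ω => ∑ m, X m ω, fun ω => ∑ m, Y m ω; P] = ∑ m, cov[X m, Y m; P] := by
  rw [covariance_fun_sum_fun_sum hX hY]
  refine Finset.sum_congr rfl fun m _ => Finset.sum_eq_single m (fun n _ hnm => ?_) (by simp)
  exact (hXY m n hnm.symm).covariance_eq_zero (hX m) (hY n)

theorem sum_mul_covariance_le [IsProbabilityMeasure P] {X : ι → Ω → ℝ}
    (hX : ∀ i, MemLp (X i) 2 P)
    {B : Matrix ι ι ℝ} {c : ℝ} (hc : 0 ≤ c) (hB : ∀ x, x ⬝ᵥ B *ᵥ x ≤ c * (x ⬝ᵥ x)) :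
    ∑ i, ∑ j, B i j * cov[X i, X j; P] ≤ c * ∑ i, ∫ ω, X i ω ^ 2 ∂P := by
  classical
  have hint : Integrable (fun ω => (fun i => X i ω - P[X i]) ⬝ᵥ (fun i => X i ω - P[X i])) P := by
    simpa using integrable_dotProduct_mulVec_sub_integral hX 1
  have hvar : ∫ ω, (fun i => X i ω - P[X i]) ⬝ᵥ (fun i => X i ω - P[X i]) ∂P
      = ∑ i, Var[X i; P] := by
    simpa [one_apply, covariance_self (hX _).aemeasurable] using
      integral_dotProduct_mulVec_sub_integral hX (1 : Matrix ι ι ℝ)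
  rw [← integral_dotProduct_mulVec_sub_integral hX]
  calc _ ≤ ∫ ω, c * ((fun i => X i ω - P[X i]) ⬝ᵥ (fun i => X i ω - P[X i])) ∂P :=
        integral_mono (integrable_dotProduct_mulVec_sub_integral hX B) (hint.const_mul c)
          fun ω => hB _
    _ = c * ∑ i, Var[X i; P] := by rw [integral_const_mul, hvar]
    _ ≤ c * ∑ i, ∫ ω, X i ω ^ 2 ∂P := by
        gcongr with i
        exact variance_le_expectation_sq (hX i).aestronglyMeasurable

theorem integral_dotProduct_mulVec_sum_sub [IsFiniteMeasure P] {α κ : Type*} [MeasurableSpace α]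
    [Fintype κ]
    {W : κ → Ω → α} (hW : ∀ m, Measurable (W m)) (hindep : iIndepFun W P)
    {ν : Measure α} (hlaw : ∀ m, P.map (W m) = ν) {a : ι → α → ℝ}
    (ha : ∀ i, Measurable (a i)) (ha2 : ∀ i, MemLp (a i) 2 ν) (B : Matrix ι ι ℝ) :
    ∫ ω, (fun i => ∑ m, a i (W m ω) - Fintype.card κ * ∫ p, a i p ∂ν) ⬝ᵥ
        B *ᵥ (fun i => ∑ m, a i (W m ω) - Fintype.card κ * ∫ p, a i p ∂ν) ∂P
      = Fintype.card κ * ∑ i, ∑ j, B i j * cov[a i, a j; ν] := by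
  have haW : ∀ i m, MemLp (fun ω => a i (W m ω)) 2 P := fun i m =>
    (ha2 i).comp_measurePreserving ⟨hW m, hlaw m⟩
  have hmean : ∀ i, ∫ ω, ∑ m, a i (W m ω) ∂P = Fintype.card κ * ∫ p, a i p ∂ν := by
    intro i
    have hcomp : ∀ m, ∫ ω, a i (W m ω) ∂P = ∫ p, a i p ∂ν := fun m => by
      rw [← hlaw m, integral_map (hW m).aemeasurable (ha i).aestronglyMeasurable]
    simp [integral_finsetSum _ fun m _ => (haW i m).integrable one_le_two, hcomp]
  have hcov : ∀ i j, cov[fun ω => ∑ m, a i (W m ω), fun ω => ∑ m, a j (W m ω); P]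
      = Fintype.card κ * cov[a i, a j; ν] := by
    intro i j
    rw [covariance_sum_sum_of_indepFun (haW i) (haW j)
      fun m n hmn => (hindep.indepFun hmn).comp (ha i) (ha j)]
    have hcomp : ∀ m, cov[fun ω => a i (W m ω), fun ω => a j (W m ω); P] = cov[a i, a j; ν] :=
      fun m => by
        rw [← hlaw m, covariance_map (ha i).aestronglyMeasurable (ha j).aestronglyMeasurable
          (hW m).aemeasurable]
        rfl
    simp [hcomp]
  simp_rw [← hmean]
  rw [integral_dotProduct_mulVec_sub_integral (X := fun i ω => ∑ m, a i (W m ω))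
    fun i => memLp_finsetSum _ fun m _ => haW i m]
  simp_rw [hcov, Finset.mul_sum]
  exact Finset.sum_congr rfl fun i _ => Finset.sum_congr rfl fun j _ => by ring

theorem integral_dotProduct_mulVec_sum_sub_le [IsFiniteMeasure P] {α κ : Type*}
    [MeasurableSpace α] [Fintype κ]
    {W : κ → Ω → α} (hW : ∀ m, Measurable (W m)) (hindep : iIndepFun W P)
    {ν : Measure α} [IsProbabilityMeasure ν] (hlaw : ∀ m, P.map (W m) = ν) {a : ι → α → ℝ}
    (ha : ∀ i, Measurable (a i)) (ha2 : ∀ i, MemLp (a i) 2 ν)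
    {B : Matrix ι ι ℝ} {c : ℝ} (hc : 0 ≤ c) (hB : ∀ x, x ⬝ᵥ B *ᵥ x ≤ c * (x ⬝ᵥ x)) :
    ∫ ω, (fun i => ∑ m, a i (W m ω) - Fintype.card κ * ∫ p, a i p ∂ν) ⬝ᵥ
        B *ᵥ (fun i => ∑ m, a i (W m ω) - Fintype.card κ * ∫ p, a i p ∂ν) ∂P
      ≤ Fintype.card κ * (c * ∑ i, ∫ p, a i p ^ 2 ∂ν) := by
  rw [integral_dotProduct_mulVec_sum_sub hW hindep hlaw ha ha2]
  gcongr
  exact sum_mul_covariance_le ha2 hc hB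

end Covariance

section ConditionalExpectation

variable {Ω : Type*} {m m₀ : MeasurableSpace Ω} {P : Measure[m₀] Ω}

theorem lintegral_mul_condLExp (hm : m ≤ m₀) [SigmaFinite (P.trim hm)] {g X : Ω → ℝ≥0∞}
    (hg : Measurable[m] g) (hX : Measurable X) :
    ∫⁻ ω, g ω * X ω ∂P = ∫⁻ ω, g ω * P⁻[X|m] ω ∂P := by
  have htrim : (P.withDensity X).trim hm = (P.withDensity P⁻[X|m]).trim hm := by
    refine @Measure.ext _ m _ _ fun s hs => ?_
    rw [trim_measurableSet_eq hm hs, trim_measurableSet_eq hm hs, withDensity_apply _ (hm s hs),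
      withDensity_apply _ (hm s hs), setLIntegral_condLExp hm P X hs]
  calc ∫⁻ ω, g ω * X ω ∂P = ∫⁻ ω, g ω ∂(P.withDensity X).trim hm := by
        rw [lintegral_trim hm hg, lintegral_withDensity_eq_lintegral_mul _ hX (hg.mono hm le_rfl)]
        simp only [Pi.mul_apply, mul_comm]
    _ = ∫⁻ ω, g ω * P⁻[X|m] ω ∂P := by
        rw [htrim, lintegral_trim hm hg, lintegral_withDensity_eq_lintegral_mul _
          (measurable_condLExp' m P X) (hg.mono hm le_rfl)]
        simp only [Pi.mul_apply, mul_comm]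

/-- Working in `ℝ≥0∞`, the integrability of `g * f` comes out of the bound instead of being
needed to pull `g` out of the conditional expectation. -/
theorem integral_mul_le_of_condExp_le [IsFiniteMeasure P] (hm : m ≤ m₀) {f g : Ω → ℝ}
    (hf : Integrable f P) (hfm : Measurable f) (hf0 : 0 ≤ f) (hg : Measurable[m] g) (hg0 : 0 ≤ g)
    (hgi : Integrable g P) {C : ℝ} (hC : 0 ≤ C) (hfC : P[f|m] ≤ᵐ[P] fun _ => C) :
    Integrable (fun ω => g ω * f ω) P ∧ ∫ ω, g ω * f ω ∂P ≤ C * ∫ ω, g ω ∂P := by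
  have hgf0 : 0 ≤ᵐ[P] fun ω => g ω * f ω := .of_forall fun ω => mul_nonneg (hg0 ω) (hf0 ω)
  have hgfm : AEStronglyMeasurable (fun ω => g ω * f ω) P :=
    ((hg.mono hm le_rfl).mul hfm).aestronglyMeasurable
  have hbound : ∫⁻ ω, ENNReal.ofReal (g ω * f ω) ∂P ≤ ENNReal.ofReal (C * ∫ ω, g ω ∂P) := by
    calc ∫⁻ ω, ENNReal.ofReal (g ω * f ω) ∂P
        = ∫⁻ ω, ENNReal.ofReal (g ω) * P⁻[fun ω => ENNReal.ofReal (f ω)|m] ω ∂P := by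
          simp_rw [ENNReal.ofReal_mul (hg0 _)]
          exact lintegral_mul_condLExp hm hg.ennreal_ofReal hfm.ennreal_ofReal
      _ ≤ ∫⁻ ω, ENNReal.ofReal (g ω) * ENNReal.ofReal C ∂P := by
          refine lintegral_mono_ae ?_
          filter_upwards [condLExp_ofReal m hf (.of_forall hf0), hfC] with ω hω hωC
          rw [hω]
          gcongr
      _ = ENNReal.ofReal (C * ∫ ω, g ω ∂P) := by
          rw [lintegral_mul_const' _ _ ENNReal.ofReal_ne_top,
            ← ofReal_integral_eq_lintegral_ofReal hgi (.of_forall hg0), ENNReal.ofReal_mul hC,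
            mul_comm]
  have hint : Integrable (fun ω => g ω * f ω) P :=
    (lintegral_ofReal_ne_top_iff_integrable hgfm hgf0).1
      (ne_top_of_le_ne_top ENNReal.ofReal_ne_top hbound)
  refine ⟨hint, ?_⟩
  rw [integral_eq_lintegral_of_nonneg_ae hgf0 hgfm]
  exact ENNReal.toReal_le_of_le_ofReal (mul_nonneg hC (integral_nonneg hg0)) hbound

theorem condExp_sq_le [IsFiniteMeasure P] (hm : m ≤ m₀) {Y u v : Ω → ℝ} (hY : MemLp Y 2 P)
    (hu : P[Y|m] =ᵐ[P] u) (hv : P[fun ω => (Y ω - u ω) ^ 2|m] =ᵐ[P] v)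
    {D s : ℝ} (huD : ∀ᵐ ω ∂P, |u ω| ≤ D) (hvs : ∀ᵐ ω ∂P, v ω ≤ s) :
    P[Y ^ 2|m] ≤ᵐ[P] fun _ => s + D ^ 2 := by
  have hvar : Var[Y; P | m] =ᵐ[P] v :=
    (condExp_congr_ae (by filter_upwards [hu] with ω hω; simp [hω])).trans hv
  filter_upwards [condVar_ae_eq_condExp_sq_sub_sq_condExp hm hY, hvar, hu, huD, hvs]
    with ω hω hωv hωu hωD hωs
  simp only [Pi.sub_apply, Pi.pow_apply, hωv, hωu] at hω
  have : u ω ^ 2 ≤ D ^ 2 := sq_le_sq' (abs_le.1 hωD).1 (abs_le.1 hωD).2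
  linarith

end ConditionalExpectation

section RegressionPair

variable {Ω α : Type*} [MeasurableSpace Ω] [MeasurableSpace α] {P : Measure Ω}
  [IsProbabilityMeasure P] {V : Ω → α} {Y : Ω → ℝ} {φ : α → ℝ}

theorem memLp_mul_and_integral_sq_le_of_condExp_sq_le (hV : Measurable V) (hY : Measurable Y)
    (hY2 : MemLp Y 2 P) {C : ℝ} (hC : 0 ≤ C)
    (hYC : P[Y ^ 2|MeasurableSpace.comap V inferInstance] ≤ᵐ[P] fun _ => C)
    (hφ : Measurable φ) (hφ2 : MemLp φ 2 (P.map V)) :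
    MemLp (fun p : α × ℝ => φ p.1 * p.2) 2 (P.map fun ω => (V ω, Y ω)) ∧
      ∫ p, (φ p.1 * p.2) ^ 2 ∂(P.map fun ω => (V ω, Y ω)) ≤ C * ∫ z, φ z ^ 2 ∂P.map V := by
  have hVY : Measurable fun ω => (V ω, Y ω) := hV.prodMk hY
  have hmul : Measurable fun p : α × ℝ => φ p.1 * p.2 := (hφ.comp measurable_fst).mul measurable_snd
  obtain ⟨hint, hle⟩ := integral_mul_le_of_condExp_le (g := fun ω => φ (V ω) ^ 2) hV.comap_le
    hY2.integrable_sq (hY.pow_const 2) (fun ω => sq_nonneg (Y ω))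
    ((hφ.pow_const 2).comp (comap_measurable V)) (fun ω => sq_nonneg (φ (V ω)))
    (hφ2.comp_measurePreserving ⟨hV, rfl⟩).integrable_sq hC hYC
  simp only [← mul_pow] at hint hle
  refine ⟨(memLp_map_measure_iff hmul.aestronglyMeasurable hVY.aemeasurable).2
    ((memLp_two_iff_integrable_sq (hmul.comp hVY).aestronglyMeasurable).2 hint), ?_⟩
  rwa [integral_map hVY.aemeasurable (hmul.pow_const 2).aestronglyMeasurable,
    integral_map hV.aemeasurable (hφ.pow_const 2).aestronglyMeasurable]

theorem integral_mul_map_eq_of_condExp_eq (hV : Measurable V) (hY : Measurable Y)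
    (hY1 : Integrable Y P) {u : α → ℝ} (hu_meas : Measurable u)
    (hu : P[Y|MeasurableSpace.comap V inferInstance] =ᵐ[P] fun ω => u (V ω))
    (hφ : Measurable φ)
    (hφY : Integrable (fun p : α × ℝ => φ p.1 * p.2) (P.map fun ω => (V ω, Y ω))) :
    ∫ p, φ p.1 * p.2 ∂(P.map fun ω => (V ω, Y ω)) = ∫ z, φ z * u z ∂P.map V := by
  have hVY : Measurable fun ω => (V ω, Y ω) := hV.prodMk hY
  have hmul : Measurable fun p : α × ℝ => φ p.1 * p.2 := (hφ.comp measurable_fst).mul measurable_snd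
  have hpull := condExp_mul_of_stronglyMeasurable_left (m := MeasurableSpace.comap V inferInstance)
    (hφ.comp (comap_measurable V)).stronglyMeasurable
    ((integrable_map_measure hmul.aestronglyMeasurable hVY.aemeasurable).1 hφY) hY1
  rw [integral_map hVY.aemeasurable hmul.aestronglyMeasurable,
    integral_map (f := fun z => φ z * u z) hV.aemeasurable (hφ.mul hu_meas).aestronglyMeasurable,
    ← integral_condExp hV.comap_le]
  refine integral_congr_ae (hpull.trans ?_)
  filter_upwards [hu] with ω hω
  simp [hω]

end RegressionPair

theorem pseudo_regression_variance_term_general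
    {d K M : ℕ} (hM : 0 < M)
    {Ω : Type} [MeasurableSpace Ω] (P : Measure Ω) [IsProbabilityMeasure P]
    (𝒟 : Set (Fin d → ℝ))
    (μ : Measure (Fin d → ℝ)) [IsProbabilityMeasure μ] (hμ𝒟 : μ 𝒟ᶜ = 0)
    (ψ : Fin K → (Fin d → ℝ) → ℝ) (hψmeas : ∀ k, Measurable (ψ k))
    (hψL2 : ∀ k, MemLp (ψ k) 2 μ)
    (U : Fin M → Ω → (Fin d → ℝ)) (Y : Fin M → Ω → ℝ)
    (hUmeas : ∀ m, Measurable (U m)) (hYmeas : ∀ m, Measurable (Y m))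
    (hindep : iIndepFun (fun m ω => (U m ω, Y m ω)) P)
    (hident : ∀ m, Measure.map (fun ω => (U m ω, Y m ω)) P
      = Measure.map (fun ω => (U ⟨0, hM⟩ ω, Y ⟨0, hM⟩ ω)) P)
    (hlaw : Measure.map (U ⟨0, hM⟩) P = μ)
    (hYL2 : MemLp (Y ⟨0, hM⟩) 2 P)
    (u : (Fin d → ℝ) → ℝ) (humeas : Measurable u)
    (hu : P[Y ⟨0, hM⟩ | MeasurableSpace.comap (U ⟨0, hM⟩) inferInstance]
      =ᵐ[P] fun ω => u (U ⟨0, hM⟩ ω))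
    (D : ℝ) (hD : ∀ z ∈ 𝒟, |u z| ≤ D)
    (σ : ℝ) (v : (Fin d → ℝ) → ℝ)
    (hv : ∀ z ∈ 𝒟, v z ≤ σ ^ 2)
    (hcondVar : P[fun ω => (Y ⟨0, hM⟩ ω - u (U ⟨0, hM⟩ ω)) ^ 2 |
        MeasurableSpace.comap (U ⟨0, hM⟩) inferInstance]
      =ᵐ[P] fun ω => v (U ⟨0, hM⟩ ω))
    (G : Matrix (Fin K) (Fin K) ℝ)
    (hG : ∀ k l, G k l = ∫ z, ψ k z * ψ l z ∂μ)
    (lam Lam : ℝ) (hlam : 0 < lam)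
    (heig : ∀ x : Fin K → ℝ,
      lam * ∑ k, x k ^ 2 ≤ ∑ k, ∑ l, x k * G k l * x l ∧
      ∑ k, ∑ l, x k * G k l * x l ≤ Lam * ∑ k, x k ^ 2)
    -- `u^K = ∑ₖ γₖ ψₖ` is the `L²(μ)`-orthogonal projection of `u` onto `span{ψ₁,…,ψ_K}`
    (γ : Fin K → ℝ)
    (hproj : ∀ k, ∫ z, ((∑ l, γ l * ψ l z) - u z) * ψ k z ∂μ = 0) :
    (∫ ω, ∫ z in 𝒟,
        ((∑ k, ((M : ℝ)⁻¹ * ∑ l, G⁻¹ k l * ∑ m, ψ l (U m ω) * Y m ω) * ψ k z)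
          - ∑ k, γ k * ψ k z) ^ 2 ∂μ ∂P)
      ≤ (σ ^ 2 + D ^ 2) * G.trace / (M * lam) ∧
    (σ ^ 2 + D ^ 2) * G.trace / (M * lam) ≤ (σ ^ 2 + D ^ 2) * K * Lam / (M * lam) := by
  set m0 : Fin M := ⟨0, hM⟩
  have hlow : ∀ x, lam * (x ⬝ᵥ x) ≤ x ⬝ᵥ G *ᵥ x := fun x => by
    simpa [sum_sq_eq_dotProduct_self, sum_sum_mul_mul_eq_dotProduct_mulVec] using (heig x).1
  have hup : ∀ x, x ⬝ᵥ G *ᵥ x ≤ Lam * (x ⬝ᵥ x) := fun x => by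
    simpa [sum_sq_eq_dotProduct_self, sum_sum_mul_mul_eq_dotProduct_mulVec] using (heig x).2
  refine ⟨?_, by rw [mul_assoc]; gcongr; simpa using trace_le_card_mul hup⟩
  have hDae : ∀ᵐ z ∂μ, z ∈ 𝒟 := ae_iff.2 hμ𝒟
  have hU0 {p : (Fin d → ℝ) → Prop} (hp : ∀ᵐ z ∂μ, p z) : ∀ᵐ ω ∂P, p (U m0 ω) :=
    ae_of_ae_map (hUmeas m0).aemeasurable (hlaw ▸ hp)
  have hcond : P[Y m0 ^ 2|MeasurableSpace.comap (U m0) inferInstance] ≤ᵐ[P]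
      fun _ => σ ^ 2 + D ^ 2 :=
    condExp_sq_le (hUmeas m0).comap_le hYL2 hu hcondVar (hU0 (hDae.mono hD)) (hU0 (hDae.mono hv))
  set ν := P.map fun ω => (U m0 ω, Y m0 ω)
  have : IsProbabilityMeasure ν :=
    Measure.isProbabilityMeasure_map ((hUmeas m0).prodMk (hYmeas m0)).aemeasurable
  set a : Fin K → (Fin d → ℝ) × ℝ → ℝ := fun l p => ψ l p.1 * p.2
  have ha2 l : MemLp (a l) 2 ν ∧ ∫ p, a l p ^ 2 ∂ν ≤ (σ ^ 2 + D ^ 2) * G l l := by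
    simpa [hlaw, hG, sq] using memLp_mul_and_integral_sq_le_of_condExp_sq_le (hUmeas m0)
      (hYmeas m0) hYL2 (by positivity) hcond (hψmeas l) (hlaw ▸ hψL2 l)
  have hmean l : ∫ p, a l p ∂ν = (G *ᵥ γ) l := by
    have hu_int k : Integrable (fun z => u z * ψ k z) μ :=
      ((hψL2 k).integrable one_le_two).bdd_mul humeas.aestronglyMeasurable
        (hDae.mono fun z hz => (Real.norm_eq_abs _).trans_le (hD z hz))
    rw [integral_mul_map_eq_of_condExp_eq (hUmeas m0) (hYmeas m0) (hYL2.integrable one_le_two)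
      humeas hu (hψmeas l) ((ha2 l).1.integrable one_le_two), hlaw,
      mulVec_apply_eq_integral_of_orthogonal hψL2 hG hu_int hproj]
  have hvar := integral_dotProduct_mulVec_sum_sub_le (a := a)
    (fun m => (hUmeas m).prodMk (hYmeas m)) hindep hident
    (fun l => ((hψmeas l).comp measurable_fst).mul measurable_snd) (fun l => (ha2 l).1)
    (inv_nonneg.2 hlam.le) (dotProduct_inv_mulVec_le hlam hlow)
  rw [Fintype.card_fin] at hvar
  set w : Ω → Fin K → ℝ := fun ω i => ∑ m, a i (U m ω, Y m ω) - M * ∫ p, a i p ∂ν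
  have hdet := isUnit_det_of_coercive hlam hlow
  calc _ = ∫ ω, (M : ℝ)⁻¹ ^ 2 * (w ω ⬝ᵥ G⁻¹ *ᵥ w ω) ∂P := by
        refine integral_congr_ae (.of_forall fun ω => ?_)
        dsimp only
        rw [Measure.restrict_eq_self_of_ae_mem hDae,
          integral_sq_sum_sub_eq hψL2 hG hdet (Nat.cast_ne_zero.2 hM.ne')]
        congr 3 <;> ext i <;> simp [w, hmean, a]
    _ ≤ (M : ℝ)⁻¹ ^ 2 * (M * (lam⁻¹ * ∑ i, ∫ p, a i p ^ 2 ∂ν)) := by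
        rw [integral_const_mul]
        exact mul_le_mul_of_nonneg_left hvar (by positivity)
    _ ≤ (M : ℝ)⁻¹ ^ 2 * (M * (lam⁻¹ * ∑ i, (σ ^ 2 + D ^ 2) * G i i)) := by
        gcongr with i
        exact (ha2 i).2
    _ = (σ ^ 2 + D ^ 2) * G.trace / (M * lam) := by
        simp only [← Finset.mul_sum, trace, diag_apply]
        field_simp

/-- **Variance term of the pseudo regression estimator.**
In the pseudo regression setup, with `u^K = ∑ₖ γₖ ψₖ` the `L²(μ)`-orthogonal projection of `u`
onto `span{ψ₁,…,ψ_K}`, and with `λ` (resp. `Λ`) a positive lower (resp. upper) bound for the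
eigenvalues of the Gram matrix `𝒢` (Rayleigh-quotient bounds), one has
`E ∫_𝒟 |ū − u^K|² dμ ≤ (σ² + D²) tr(𝒢) / (M λ_min) ≤ (σ² + D²) K λ_max / (M λ_min)`. -/
theorem pseudo_regression_variance_term
    {d K M : ℕ} (hM : 0 < M)
    {Ω : Type} [MeasurableSpace Ω] (P : Measure Ω) [IsProbabilityMeasure P]
    (𝒟 : Set (Fin d → ℝ)) (h𝒟 : MeasurableSet 𝒟)
    (μ : Measure (Fin d → ℝ)) [IsProbabilityMeasure μ] (hμ𝒟 : μ 𝒟ᶜ = 0)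
    (ψ : Fin K → (Fin d → ℝ) → ℝ) (hψmeas : ∀ k, Measurable (ψ k))
    (hψL2 : ∀ k, MemLp (ψ k) 2 μ)
    (U : Fin M → Ω → (Fin d → ℝ)) (Y : Fin M → Ω → ℝ)
    (hUmeas : ∀ m, Measurable (U m)) (hYmeas : ∀ m, Measurable (Y m))
    (hindep : iIndepFun (fun m ω => (U m ω, Y m ω)) P)
    (hident : ∀ m, Measure.map (fun ω => (U m ω, Y m ω)) P
      = Measure.map (fun ω => (U ⟨0, hM⟩ ω, Y ⟨0, hM⟩ ω)) P)
    (hlaw : Measure.map (U ⟨0, hM⟩) P = μ)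
    (hYL2 : MemLp (Y ⟨0, hM⟩) 2 P)
    (u : (Fin d → ℝ) → ℝ) (humeas : Measurable u)
    (hu : P[Y ⟨0, hM⟩ | MeasurableSpace.comap (U ⟨0, hM⟩) inferInstance]
      =ᵐ[P] fun ω => u (U ⟨0, hM⟩ ω))
    (D : ℝ) (hD : ∀ z ∈ 𝒟, |u z| ≤ D)
    (σ : ℝ) (v : (Fin d → ℝ) → ℝ) (hvmeas : Measurable v)
    (hv : ∀ z ∈ 𝒟, v z ≤ σ ^ 2)
    (hcondVar : P[fun ω => (Y ⟨0, hM⟩ ω - u (U ⟨0, hM⟩ ω)) ^ 2 |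
        MeasurableSpace.comap (U ⟨0, hM⟩) inferInstance]
      =ᵐ[P] fun ω => v (U ⟨0, hM⟩ ω))
    (G : Matrix (Fin K) (Fin K) ℝ)
    (hG : ∀ k l, G k l = ∫ z, ψ k z * ψ l z ∂μ)
    (lam Lam : ℝ) (hlam : 0 < lam)
    (heig : ∀ x : Fin K → ℝ,
      lam * ∑ k, x k ^ 2 ≤ ∑ k, ∑ l, x k * G k l * x l ∧
      ∑ k, ∑ l, x k * G k l * x l ≤ Lam * ∑ k, x k ^ 2)
    -- `u^K = ∑ₖ γₖ ψₖ` is the `L²(μ)`-orthogonal projection of `u` onto `span{ψ₁,…,ψ_K}`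
    (γ : Fin K → ℝ)
    (hproj : ∀ k, ∫ z, ((∑ l, γ l * ψ l z) - u z) * ψ k z ∂μ = 0) :
    (∫ ω, ∫ z in 𝒟,
        ((∑ k, ((M : ℝ)⁻¹ * ∑ l, G⁻¹ k l * ∑ m, ψ l (U m ω) * Y m ω) * ψ k z)
          - ∑ k, γ k * ψ k z) ^ 2 ∂μ ∂P)
      ≤ (σ ^ 2 + D ^ 2) * G.trace / (M * lam) ∧
    (σ ^ 2 + D ^ 2) * G.trace / (M * lam) ≤ (σ ^ 2 + D ^ 2) * K * Lam / (M * lam) :=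
  pseudo_regression_variance_term_general hM P 𝒟 μ hμ𝒟 ψ hψmeas hψL2 U Y hUmeas hYmeas hindep hident
    hlaw hYL2 u humeas hu D hD σ v hv hcondVar G hG lam Lam hlam heig γ hproj
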